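/- Let E=(A,V,c,l) be a budgeting scenario with v = |V| voters, and let x, y ∈ A be two distinct projects with c(x) ≥ 1 and c(y) ≥ 1 such that x is approved by exactly d voters, y is approved by exactly d voters, at least one voter approves both x and y, and d² < v. Then the Möbius transform of the pair is positive, m({x,y},E) > 0, and consequently u_M({x,y},E) > c(x) + c(y). -/

import Mathlib

open Finset

/-- A participatory budgeting scenario `E = (A, V, c, l)`: a finite set of projects,
a finite nonempty family of voters each with an approval set of cost at most the budget. -/
structure Scenario (α ι : Type*) [DecidableEq α] where
  projects : Finset α
  voters : Finset ι
  voters_nonempty : voters.Nonempty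
  cost : α → ℕ
  budget : ℕ
  approval : ι → Finset α
  approval_subset : ∀ i ∈ voters, approval i ⊆ projects
  approval_feasible : ∀ i ∈ voters, ∑ a ∈ approval i, cost a ≤ budget

variable {α ι : Type*} [DecidableEq α]

/-- Appearance rate `r(S,V)`: the fraction of voters whose approval set contains `S`. -/
noncomputable def rate (E : Scenario α ι) (S : Finset α) : ℝ :=
  ((E.voters.filter fun i => S ⊆ E.approval i).card : ℝ) / (E.voters.card : ℝ)

/-- The Möbius transform `m(·,E)`: `m(∅,E) = 0`, `m({a},E) = c(a)` and, for `|S| ≥ 2`,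
`m(S,E) = max((r(S,V) - ∏_{a∈S} r({a},V))·c(S), max_{a∈S}(-∑_{C⊊S, a∈C} m(C,E)))`. -/
noncomputable def mobius (E : Scenario α ι) : Finset α → ℝ := fun S =>
  if h2 : 2 ≤ S.card then
    max ((rate E S - ∏ a ∈ S, rate E {a}) * (∑ a ∈ S, (E.cost a : ℝ)))
      (S.sup' (Finset.card_pos.mp (by omega)) fun a =>
        - ∑ C ∈ (S.powerset.filter fun C => C ≠ S ∧ a ∈ C).attach,
            mobius E C.1)
  else ∑ a ∈ S, (E.cost a : ℝ)
termination_by S => S.card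
decreasing_by
  have hC := C.2
  simp only [Finset.mem_filter, Finset.mem_powerset] at hC
  exact Finset.card_lt_card (hC.1.ssubset_of_ne hC.2.1)

/-- The utility function `u_M(S,E) = ∑_{C ⊆ S} m(C,E)`. -/
noncomputable def uM (E : Scenario α ι) (S : Finset α) : ℝ :=
  ∑ C ∈ S.powerset, mobius E C

/-! A common voter gives `r({x,y}) ≥ 1/v > d²/v² = r({x}) r({y})`, so the correlation term
in the maximum defining `m({x,y})` is already positive; and `u_M({x,y}) = c(x) + c(y) + m({x,y})`.
-/

theorem mobius_of_card_lt_two (E : Scenario α ι) {S : Finset α} (hS : S.card < 2) :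
    mobius E S = ∑ a ∈ S, (E.cost a : ℝ) := by
  rw [mobius, dif_neg (by omega)]

theorem mobius_pos_of_prod_rate_lt (E : Scenario α ι) {S : Finset α} (hS : 2 ≤ S.card)
    (hrate : ∏ a ∈ S, rate E {a} < rate E S) (hcost : 0 < ∑ a ∈ S, (E.cost a : ℝ)) :
    0 < mobius E S := by
  rw [mobius, dif_pos hS]
  exact lt_max_of_lt_left (mul_pos (sub_pos.mpr hrate) hcost)

theorem uM_pair (E : Scenario α ι) {x y : α} (hxy : x ≠ y) :
    uM E {x, y} = E.cost x + E.cost y + mobius E {x, y} := by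
  have hy : ({y} : Finset α) = insert y ∅ := rfl
  rw [uM, sum_powerset_insert (by simpa using hxy), hy,
    sum_powerset_insert (notMem_empty y), sum_powerset_insert (notMem_empty y)]
  simp only [powerset_empty, sum_singleton, ← hy, insert_empty_eq,
    mobius_of_card_lt_two E (S := ∅) (by simp), mobius_of_card_lt_two E (S := {x}) (by simp),
    mobius_of_card_lt_two E (S := {y}) (by simp), sum_empty]
  ring

theorem rate_singleton (E : Scenario α ι) (a : α) :
    rate E {a} = ((E.voters.filter fun i => a ∈ E.approval i).card : ℝ) / E.voters.card := by
  simp only [rate, singleton_subset_iff]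

theorem one_div_card_le_rate (E : Scenario α ι) {S : Finset α}
    (hS : ∃ i ∈ E.voters, S ⊆ E.approval i) : 1 / (E.voters.card : ℝ) ≤ rate E S := by
  obtain ⟨i, hi, hSi⟩ := hS
  have hpos : 0 < (E.voters.filter fun i => S ⊆ E.approval i).card :=
    card_pos.mpr ⟨i, mem_filter.mpr ⟨hi, hSi⟩⟩
  exact div_le_div_of_nonneg_right (by exact_mod_cast hpos) (Nat.cast_nonneg _)

theorem mobius_pair_positive (E : Scenario α ι) (x y : α) (d : ℕ)
    (hxy : x ≠ y)
    (hcx : 1 ≤ E.cost x)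
    (hdx : (E.voters.filter fun i => x ∈ E.approval i).card = d)
    (hdy : (E.voters.filter fun i => y ∈ E.approval i).card = d)
    (hboth : ∃ i ∈ E.voters, x ∈ E.approval i ∧ y ∈ E.approval i)
    (hd : d ^ 2 < E.voters.card) :
    0 < mobius E {x, y} ∧ ((E.cost x : ℝ) + (E.cost y : ℝ)) < uM E {x, y} := by
  have hv : (0 : ℝ) < E.voters.card := by exact_mod_cast E.voters_nonempty.card_pos
  have hdv : (d : ℝ) ^ 2 < E.voters.card := by exact_mod_cast hd
  obtain ⟨i, hi, hix, hiy⟩ := hboth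
  have hrate : ∏ a ∈ {x, y}, rate E {a} < rate E {x, y} := calc
    ∏ a ∈ {x, y}, rate E {a} = (d : ℝ) ^ 2 / E.voters.card / E.voters.card := by
      rw [prod_pair hxy, rate_singleton, rate_singleton, hdx, hdy]; ring
    _ < 1 / E.voters.card := div_lt_div_of_pos_right ((div_lt_one hv).mpr hdv) hv
    _ ≤ rate E {x, y} :=
      one_div_card_le_rate E ⟨i, hi, insert_subset hix (singleton_subset_iff.mpr hiy)⟩
  have hcost : 0 < ∑ a ∈ {x, y}, (E.cost a : ℝ) := by
    rw [sum_pair hxy]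
    have : (1 : ℝ) ≤ E.cost x := by exact_mod_cast hcx
    positivity
  have hm := mobius_pos_of_prod_rate_lt E (card_pair hxy).ge hrate hcost
  exact ⟨hm, by rw [uM_pair E hxy]; linarith⟩
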